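/- Let n ∈ ℕ, N = 2^n, and let G be the n-fold Kronecker power over 𝔽₂ of the kernel [[1,0],[1,1]]. Then for all distinct row indices i, j ∈ {0,…,N−1}, the Hamming weight of the 𝔽₂-sum of the two rows satisfies i₁(g_i + g_j) = 2^{popcount(i)} + 2^{popcount(j)} − 2^{popcount(i AND j)+1}, where AND is bitwise AND. -/

import Mathlib

open Finset

/-- The polar kernel `G₂ = [[1,0],[1,1]]` over `𝔽₂`. -/
def polarKernel : Matrix (Fin 2) (Fin 2) (ZMod 2) := !![1, 0; 1, 1]

/-- The `n`-fold Kronecker power of the polar kernel, an `N × N` matrix over `𝔽₂`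
with `N = 2 ^ n`, rows and columns indexed by `0, …, N-1`. -/
def polarG : (n : ℕ) → Matrix (Fin (2 ^ n)) (Fin (2 ^ n)) (ZMod 2)
  | 0 => 1
  | n + 1 =>
    Matrix.reindex (finCongr (by ring)) (finCongr (by ring))
      (Matrix.reindex finProdFinEquiv finProdFinEquiv
        (Matrix.kroneckerMap (· * ·) polarKernel (polarG n)))

/-- Row `g_t` of the polar matrix, as a vector in `𝔽₂^N`. -/
def row (n : ℕ) (t : Fin (2 ^ n)) : Fin (2 ^ n) → ZMod 2 := fun c => polarG n t c

/-- Hamming weight `i₁(v)`: the number of nonzero coordinates of `v`. -/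
def hammingWeight {N : ℕ} (v : Fin N → ZMod 2) : ℕ :=
  (Finset.univ.filter fun c => v c ≠ 0).card

/-- `popcount j`: the number of ones in the binary representation of `j`. -/
def popcount (j : ℕ) : ℕ := (Nat.bits j).count true

/- ### Auxiliary lemmas -/

lemma polarKernel_apply (a b : Fin 2) :
    polarKernel a b = if (b : ℕ) &&& (a : ℕ) = b then 1 else 0 := by
  fin_cases a <;> fin_cases b <;> simp [polarKernel]

lemma nat_and_mod (c i n : ℕ) : (c &&& i) % 2^n = (c % 2^n) &&& (i % 2^n) := by
  apply Nat.eq_of_testBit_eq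
  intro k
  simp only [Nat.testBit_mod_two_pow, Nat.testBit_and]
  by_cases h : k < n <;> simp [h]

lemma nat_and_div (c i n : ℕ) : (c &&& i) / 2^n = (c / 2^n) &&& (i / 2^n) := by
  simp only [← Nat.shiftRight_eq_div_pow]
  apply Nat.eq_of_testBit_eq
  intro k
  simp [Nat.testBit_shiftRight]

lemma and_split (n c i : ℕ) :
    c &&& i = c ↔ (c / 2^n) &&& (i / 2^n) = c / 2^n ∧ (c % 2^n) &&& (i % 2^n) = c % 2^n := by
  constructor
  · intro h
    exact ⟨by rw [← nat_and_div, h], by rw [← nat_and_mod, h]⟩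
  · rintro ⟨h1, h2⟩
    calc c &&& i = 2^n * ((c &&& i) / 2^n) + (c &&& i) % 2^n := (Nat.div_add_mod _ _).symm
    _ = 2^n * (c / 2^n) + c % 2^n := by rw [nat_and_div, nat_and_mod, h1, h2]
    _ = c := Nat.div_add_mod _ _

lemma and_split2 (c i : ℕ) :
    c &&& i = c ↔ (c / 2) &&& (i / 2) = c / 2 ∧ (c % 2) &&& (i % 2) = c % 2 := by
  have h := and_split 1 c i
  norm_num at h
  exact h

lemma polarG_apply : ∀ n (t c : Fin (2^n)),
    polarG n t c = if (c : ℕ) &&& (t : ℕ) = c then 1 else 0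
  | 0, t, c => by
    have h1 : (2:ℕ)^0 = 1 := pow_zero 2
    have ht := t.isLt
    have hc := c.isLt
    have hc0 : (c:ℕ) = 0 := by omega
    have htc : t = c := Fin.ext (by omega)
    simp [polarG, Matrix.one_apply, htc, hc0]
  | n + 1, t, c => by
    have hpos : 0 < 2^n := Nat.pow_pos (by norm_num)
    have ht2 : (t:ℕ) / 2^n < 2 := by
      rw [Nat.div_lt_iff_lt_mul hpos]
      have h1 := t.isLt; have h2 : (2:ℕ)^(n+1) = 2^n * 2 := (by ring); omega
    have hc2 : (c:ℕ) / 2^n < 2 := by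
      rw [Nat.div_lt_iff_lt_mul hpos]
      have h1 := c.isLt; have h2 : (2:ℕ)^(n+1) = 2^n * 2 := (by ring); omega
    have h : polarG (n+1) t c =
        polarKernel ⟨(t:ℕ)/2^n, ht2⟩ ⟨(c:ℕ)/2^n, hc2⟩ *
          polarG n ⟨(t:ℕ)%2^n, Nat.mod_lt _ hpos⟩ ⟨(c:ℕ)%2^n, Nat.mod_lt _ hpos⟩ := rfl
    rw [h, polarKernel_apply, polarG_apply n]
    simp only [Fin.val_mk]
    by_cases h1 : (c:ℕ)/2^n &&& (t:ℕ)/2^n = (c:ℕ)/2^n <;>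
      by_cases h2 : (c:ℕ)%2^n &&& (t:ℕ)%2^n = (c:ℕ)%2^n <;>
        simp [h1, h2, and_split n (c:ℕ) (t:ℕ)]

lemma popcount_div2 (i : ℕ) : popcount i = i % 2 + popcount (i / 2) := by
  rcases Nat.eq_zero_or_pos i with h | h
  · subst h; simp [popcount]
  rcases Nat.even_or_odd i with ⟨k, hk⟩ | ⟨k, hk⟩
  · have hk0 : k ≠ 0 := by omega
    have h2 : i = 2 * k := by omega
    rw [h2]
    simp [popcount, Nat.bit0_bits k hk0, Nat.mul_div_cancel_left, Nat.mul_mod_right]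
  · subst hk
    simp [popcount, Nat.bit1_bits k, Nat.mul_add_div, Nat.mul_add_mod]
    omega

lemma count_submask : ∀ n, ∀ i < 2^n,
    ((range (2^n)).filter (fun c => c &&& i = c)).card = 2 ^ popcount i := by
  intro n
  induction n with
  | zero =>
    intro i hi
    have h0 : i = 0 := by norm_num at hi; omega
    subst h0
    simp [popcount]
    decide
  | succ n ih =>
    intro i hi
    have hp : (2:ℕ)^(n+1) = 2^n * 2 := by ring
    have hi' : i / 2 < 2^n := by omega
    have key : ((range (2^(n+1))).filter (fun c => c &&& i = c)).card
        = (((range 2) ×ˢ (range (2^n))).filter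
            (fun p => p.1 &&& (i%2) = p.1 ∧ p.2 &&& (i/2) = p.2)).card := by
      refine Finset.card_nbij' (fun c => (c % 2, c / 2)) (fun p => p.1 + 2 * p.2) ?_ ?_ ?_ ?_
      · intro c hc
        simp only [mem_coe, mem_filter, mem_range] at hc
        obtain ⟨hclt, hcs⟩ := hc
        rw [and_split2] at hcs
        simp only [mem_coe, mem_filter, mem_product, mem_range]
        exact ⟨⟨by omega, by omega⟩, hcs.2, hcs.1⟩
      · intro p hp'
        simp only [mem_coe, mem_filter, mem_product, mem_range] at hp'
        obtain ⟨⟨h1, h2⟩, h3, h4⟩ := hp'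
        simp only [mem_coe, mem_filter, mem_range]
        have e1 : (p.1 + 2 * p.2) % 2 = p.1 := by omega
        have e2 : (p.1 + 2 * p.2) / 2 = p.2 := by omega
        refine ⟨by omega, ?_⟩
        rw [and_split2, e1, e2]
        exact ⟨h4, h3⟩
      · intro c hc
        show c % 2 + 2 * (c / 2) = c
        omega
      · intro p hp'
        simp only [mem_coe, mem_filter, mem_product, mem_range] at hp'
        obtain ⟨⟨h1, h2⟩, _, _⟩ := hp'
        obtain ⟨a, b⟩ := p
        simp only at h1 h2 ⊢
        have e1 : (a + 2 * b) % 2 = a := by omega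
        have e2 : (a + 2 * b) / 2 = b := by omega
        rw [e1, e2]
    rw [key, Finset.filter_product (fun a => a &&& i%2 = a) (fun b => b &&& i/2 = b),
        Finset.card_product, ih _ hi']
    have hb : ((range 2).filter (fun a => a &&& (i%2) = a)).card = 2^(i % 2) := by
      rcases Nat.mod_two_eq_zero_or_one i with h | h <;> rw [h] <;> decide
    rw [hb, popcount_div2 i, pow_add]

lemma and_inter (c i j : ℕ) : c &&& (i &&& j) = c ↔ (c &&& i = c ∧ c &&& j = c) := by
  constructor
  · intro h
    refine ⟨Nat.eq_of_testBit_eq fun k => ?_, Nat.eq_of_testBit_eq fun k => ?_⟩ <;>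
    · have hk := congrArg (fun x => Nat.testBit x k) h
      simp only [Nat.testBit_and] at hk ⊢
      revert hk; cases c.testBit k <;> cases i.testBit k <;> cases j.testBit k <;> simp
  · rintro ⟨h1, h2⟩
    apply Nat.eq_of_testBit_eq; intro k
    have k1 := congrArg (fun x => Nat.testBit x k) h1
    have k2 := congrArg (fun x => Nat.testBit x k) h2
    simp only [Nat.testBit_and] at k1 k2 ⊢
    revert k1 k2
    cases c.testBit k <;> cases i.testBit k <;> cases j.testBit k <;> simp

lemma card_filter_fin (N : ℕ) (p : ℕ → Prop) [DecidablePred p] :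
    ((Finset.univ : Finset (Fin N)).filter (fun c : Fin N => p (c:ℕ))).card
      = ((range N).filter p).card := by
  refine Finset.card_nbij (fun c => (c:ℕ)) ?_ ?_ ?_
  · intro c hc
    simp only [mem_coe, mem_filter, mem_range, mem_univ, true_and] at hc ⊢
    exact ⟨c.isLt, hc⟩
  · intro a _ b _ hab
    exact Fin.ext hab
  · intro b hb
    simp only [Finset.coe_filter, mem_range, Set.mem_image, Set.mem_setOf_eq,
      mem_univ, true_and, mem_coe] at hb ⊢
    exact ⟨⟨b, hb.1⟩, hb.2, rfl⟩

/-- the Hamming weight of the sum of two distinct rows is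
`2^popcount(i) + 2^popcount(j) - 2^(popcount(i AND j)+1)`. -/
theorem hamming_weight_two_rows (n : ℕ) (i j : Fin (2 ^ n)) (hij : i ≠ j) :
    (hammingWeight (row n i + row n j) : ℤ) =
      2 ^ popcount (i : ℕ) + 2 ^ popcount (j : ℕ) -
        2 ^ (popcount ((i : ℕ) &&& (j : ℕ)) + 1) := by
  have hstep : hammingWeight (row n i + row n j)
      = ((Finset.univ : Finset (Fin (2^n))).filter
          (fun c : Fin (2^n) => ¬((c:ℕ) &&& (i:ℕ) = (c:ℕ) ↔ (c:ℕ) &&& (j:ℕ) = (c:ℕ)))).card := by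
    unfold hammingWeight
    congr 1
    apply Finset.filter_congr
    intro c _
    show (row n i + row n j) c ≠ 0 ↔ _
    rw [Pi.add_apply]
    unfold row
    rw [polarG_apply, polarG_apply]
    by_cases h1 : (c:ℕ) &&& (i:ℕ) = (c:ℕ) <;>
      by_cases h2 : (c:ℕ) &&& (j:ℕ) = (c:ℕ) <;> simp [h1, h2] <;> decide
  rw [hstep, card_filter_fin (2^n) (fun c => ¬(c &&& (i:ℕ) = c ↔ c &&& (j:ℕ) = c))]
  set A := (range (2^n)).filter (fun c => c &&& (i:ℕ) = c) with hA
  set B := (range (2^n)).filter (fun c => c &&& (j:ℕ) = c) with hB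
  have hsplit : (range (2^n)).filter (fun c => ¬(c &&& (i:ℕ) = c ↔ c &&& (j:ℕ) = c))
      = (A \ B) ∪ (B \ A) := by
    ext c
    simp only [hA, hB, mem_filter, mem_union, mem_sdiff, mem_range]
    tauto
  have hdisj : Disjoint (A \ B) (B \ A) := disjoint_sdiff_sdiff
  have hAB : A ∩ B = (range (2^n)).filter (fun c => c &&& ((i:ℕ) &&& (j:ℕ)) = c) := by
    ext c
    simp only [hA, hB, mem_inter, mem_filter, mem_range, and_inter]
    tauto
  have h1 : (A ∩ B).card + (A \ B).card = A.card := Finset.card_inter_add_card_sdiff A B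
  have h2 : (B ∩ A).card + (B \ A).card = B.card := Finset.card_inter_add_card_sdiff B A
  rw [Finset.inter_comm B A] at h2
  have cA : A.card = 2 ^ popcount (i:ℕ) := count_submask n _ i.isLt
  have cB : B.card = 2 ^ popcount (j:ℕ) := count_submask n _ j.isLt
  have hlt : (i:ℕ) &&& (j:ℕ) < 2^n := lt_of_le_of_lt Nat.and_le_left i.isLt
  have cC : (A ∩ B).card = 2 ^ popcount ((i:ℕ) &&& (j:ℕ)) := by
    rw [hAB]; exact count_submask n _ hlt
  have cA' : (A.card : ℤ) = 2 ^ popcount (i:ℕ) := by exact_mod_cast congrArg Nat.cast cA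
  have cB' : (B.card : ℤ) = 2 ^ popcount (j:ℕ) := by exact_mod_cast congrArg Nat.cast cB
  have cC' : ((A ∩ B).card : ℤ) = 2 ^ popcount ((i:ℕ) &&& (j:ℕ)) := by
    exact_mod_cast congrArg Nat.cast cC
  have hpow : (2:ℤ) ^ (popcount ((i:ℕ) &&& (j:ℕ)) + 1)
      = 2 * 2 ^ popcount ((i:ℕ) &&& (j:ℕ)) := by ring
  rw [hsplit, Finset.card_union_of_disjoint hdisj]
  push_cast
  rw [← cA', ← cB', hpow, ← cC']
  omega
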